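/- Let K be a field of characteristic 0 and let Q ∈ K[x,y] be a nonzero polynomial such that the polynomial q(x) = Q(x,0) satisfies q(0) ≠ 0. Let Q⋆ ∈ K[x,y] be a squarefree part of Q. Then the power series 1/Q ∈ K(x)[[y]] (the inverse of Q in K(x)[[y]], which exists since q ≠ 0) satisfies: q·(1/Q) belongs to 𝓔_δ(Q⋆(x,0)), where δ = deg_x Q⋆. -/

import Mathlib

open Polynomial PowerSeries

/-- `𝓔_α(Q)`: the set of power series in `K(x)[[y]]` of the form
`Σ_n c_n(x) yⁿ / Q(x)ⁿ` with `deg c_n ≤ n·α`. -/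
def Ecal (K : Type*) [Field K] (α : ℕ) (Q : Polynomial K) :
    Set (PowerSeries (RatFunc K)) :=
  {A | ∃ c : ℕ → Polynomial K, (∀ n, (c n).natDegree ≤ n * α) ∧
    ∀ n, PowerSeries.coeff n A =
      algebraMap (Polynomial K) (RatFunc K) (c n) /
        (algebraMap (Polynomial K) (RatFunc K) Q) ^ n}

/-- `Qs` is a squarefree part of `Q`, i.e. `Q = Q₁ Q₂² ⋯ Q_m^m` is a squarefree
decomposition (the `Qᵢ` squarefree and pairwise coprime) and `Qs = Q₁ ⋯ Q_m`. -/
def IsSquarefreePart {R : Type*} [CommRing R] (Q Qs : R) : Prop :=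
  ∃ (m : ℕ) (f : Fin m → R),
    (∀ i, Squarefree (f i)) ∧
    (∀ i j, i ≠ j → IsRelPrime (f i) (f j)) ∧
    Q = ∏ i, f i ^ ((i : ℕ) + 1) ∧
    Qs = ∏ i, f i

/-- `deg_x` of a bivariate polynomial in `K[x][y]` (inner variable `x`). -/
noncomputable def degX {K : Type*} [Field K] (P : Polynomial (Polynomial K)) : ℕ :=
  P.support.sup fun j => (P.coeff j).natDegree

/-- A bivariate polynomial `Q ∈ K[x][y]` viewed as an element of `K(x)[[y]]`. -/
noncomputable def toSeries {K : Type*} [Field K] (Q : Polynomial (Polynomial K)) :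
    PowerSeries (RatFunc K) :=
  ↑(Q.map (algebraMap (Polynomial K) (RatFunc K)))

open Finset

/-! Write `Q = ∏ Qᵢ^(i+1)`. Then `Q/q = ∏ (Qᵢ/qᵢ)^(i+1)` with `qᵢ = Qᵢ(x,0)`, and the `n`-th
coefficient of `Qᵢ/qᵢ` is `Qᵢ,ₙ qᵢⁿ⁻¹ / qᵢⁿ`, so `Qᵢ/qᵢ ∈ 𝓔_{δᵢ}(qᵢ)` with `δᵢ = deg_x Qᵢ`.
Rewriting `a/qᵢⁿ` as `a rⁿ/(qᵢ r)ⁿ`, products of such series land in `𝓔_{Σ δᵢ}(∏ qᵢ)`, and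
`Σ δᵢ = deg_x Q⋆` because `deg_x` is additive. Finally `𝓔_α(p)` is closed under inversion of
series with constant coefficient `1`: the recursion `bₙ = -Σ_{i+j=n, j<n} aᵢ bⱼ` for the
coefficients of the inverse only multiplies and adds admissible coefficients. -/

theorem Polynomial.Bivariate.coeff_coeff_swap {R : Type*} [CommSemiring R] (P : R[X][X]) (i j : ℕ) :
    ((swap P).coeff i).coeff j = (P.coeff j).coeff i := by
  induction P using Polynomial.induction_on' with
  | add P R hP hR => simp [hP, hR]
  | monomial n a =>
    induction a using Polynomial.induction_on' with
    | add a b ha hb => simp only [(monomial n).map_add, map_add, coeff_add, ha, hb]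
    | monomial m r =>
      simp only [swap_monomial_monomial, coeff_monomial]
      split_ifs <;> simp_all [coeff_monomial]

section DegX

variable {K : Type*} [Field K]

theorem natDegree_coeff_le_degX (P : K[X][X]) (j : ℕ) : (P.coeff j).natDegree ≤ degX P := by
  by_cases h : j ∈ P.support
  · exact Finset.le_sup (f := fun j => (P.coeff j).natDegree) h
  · simp [notMem_support_iff.mp h]

theorem natDegree_eval_zero_le_degX (P : K[X][X]) : (P.eval 0).natDegree ≤ degX P :=
  coeff_zero_eq_eval_zero P ▸ natDegree_coeff_le_degX P 0

theorem degX_eq_natDegree_swap (P : K[X][X]) : degX P = (Bivariate.swap P).natDegree := by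
  apply le_antisymm
  · refine Finset.sup_le fun j _ => natDegree_le_iff_coeff_eq_zero.mpr fun i hi => ?_
    rw [← Bivariate.coeff_coeff_swap, coeff_eq_zero_of_natDegree_lt hi, coeff_zero]
  · refine natDegree_le_iff_coeff_eq_zero.mpr fun i hi => Polynomial.ext fun j => ?_
    rw [Bivariate.coeff_coeff_swap, coeff_zero]
    exact coeff_eq_zero_of_natDegree_lt ((natDegree_coeff_le_degX P j).trans_lt hi)

theorem degX_prod {ι : Type*} (s : Finset ι) (f : ι → K[X][X]) (hf : ∀ i ∈ s, f i ≠ 0) :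
    degX (∏ i ∈ s, f i) = ∑ i ∈ s, degX (f i) := by
  simp only [degX_eq_natDegree_swap, map_prod]
  exact natDegree_prod _ _ fun i hi => (map_ne_zero_iff _ Bivariate.swap.injective).mpr (hf i hi)

end DegX

section Ecal

variable {K : Type*} [Field K] {α β : ℕ} {p r : K[X]} {A B : PowerSeries (RatFunc K)}

def ecalCoeffs (K : Type*) [Field K] (α : ℕ) (p : K[X]) (n : ℕ) : AddSubgroup (RatFunc K) where
  carrier := {a | ∃ c : K[X], c.natDegree ≤ n * α ∧
    a = algebraMap K[X] (RatFunc K) c / algebraMap K[X] (RatFunc K) p ^ n}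
  zero_mem' := ⟨0, by simp, by simp⟩
  add_mem' := by
    rintro _ _ ⟨c, hc, rfl⟩ ⟨d, hd, rfl⟩
    exact ⟨c + d, natDegree_add_le_of_degree_le hc hd, by rw [map_add, add_div]⟩
  neg_mem' := by
    rintro _ ⟨c, hc, rfl⟩
    exact ⟨-c, by rwa [natDegree_neg], by rw [map_neg, neg_div]⟩

theorem mem_Ecal_iff : A ∈ Ecal K α p ↔ ∀ n, coeff n A ∈ ecalCoeffs K α p n := by
  simp only [Ecal, ecalCoeffs, Set.mem_ofPred_eq, AddSubgroup.mem_mk, AddSubmonoid.mem_mk,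
    AddSubsemigroup.mem_mk]
  rw [Classical.skolem]
  simp only [forall_and]

theorem mul_mem_ecalCoeffs {m n : ℕ} {a b : RatFunc K} (ha : a ∈ ecalCoeffs K α p m)
    (hb : b ∈ ecalCoeffs K α p n) : a * b ∈ ecalCoeffs K α p (m + n) := by
  obtain ⟨c, hc, rfl⟩ := ha
  obtain ⟨d, hd, rfl⟩ := hb
  exact ⟨c * d, (natDegree_mul_le_of_le hc hd).trans_eq (add_mul m n α).symm,
    by rw [map_mul, div_mul_div_comm, pow_add]⟩

theorem Ecal.one_mem : (1 : PowerSeries (RatFunc K)) ∈ Ecal K α p := by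
  rw [mem_Ecal_iff]
  rintro (_ | n)
  · exact ⟨1, by simp, by simp⟩
  · simp [PowerSeries.coeff_one]

theorem Ecal.mul_mem (hA : A ∈ Ecal K α p) (hB : B ∈ Ecal K α p) : A * B ∈ Ecal K α p := by
  rw [mem_Ecal_iff] at *
  intro n
  rw [PowerSeries.coeff_mul]
  refine sum_mem fun x hx => ?_
  rw [← mem_antidiagonal.mp hx]
  exact mul_mem_ecalCoeffs (hA x.1) (hB x.2)

def Ecal.submonoid (K : Type*) [Field K] (α : ℕ) (p : K[X]) :
    Submonoid (PowerSeries (RatFunc K)) where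
  carrier := Ecal K α p
  one_mem' := Ecal.one_mem
  mul_mem' := Ecal.mul_mem

theorem Ecal.subset_mul (hr : r ≠ 0) (hrβ : r.natDegree ≤ β) :
    Ecal K α p ⊆ Ecal K (α + β) (p * r) := by
  intro A hA
  rw [mem_Ecal_iff] at hA ⊢
  intro n
  obtain ⟨c, hc, hcA⟩ := hA n
  refine ⟨c * r ^ n, ?_, ?_⟩
  · exact (natDegree_mul_le_of_le hc (natDegree_pow_le_of_le n hrβ)).trans_eq
      (mul_add n α β).symm
  · rw [hcA, map_mul, map_pow, map_mul, mul_pow,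
      mul_div_mul_right _ _ (pow_ne_zero n (RatFunc.algebraMap_ne_zero hr))]

theorem Ecal.mul_mem_mul (hp : p ≠ 0) (hr : r ≠ 0) (hpα : p.natDegree ≤ α)
    (hrβ : r.natDegree ≤ β) (hA : A ∈ Ecal K α p) (hB : B ∈ Ecal K β r) :
    A * B ∈ Ecal K (α + β) (p * r) := by
  refine Ecal.mul_mem (Ecal.subset_mul hr hrβ hA) ?_
  rw [add_comm α, mul_comm p]
  exact Ecal.subset_mul hp hpα hB

theorem Ecal.prod_mem_prod {ι : Type*} {s : Finset ι} {α : ι → ℕ} {p : ι → K[X]}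
    {A : ι → PowerSeries (RatFunc K)} (hp : ∀ i ∈ s, p i ≠ 0)
    (hpα : ∀ i ∈ s, (p i).natDegree ≤ α i) (hA : ∀ i ∈ s, A i ∈ Ecal K (α i) (p i)) :
    ∏ i ∈ s, A i ∈ Ecal K (∑ i ∈ s, α i) (∏ i ∈ s, p i) := by
  classical
  induction s using Finset.induction_on with
  | empty => simpa using Ecal.one_mem
  | insert a s ha ih =>
    simp only [Finset.forall_mem_insert] at hp hpα hA
    rw [prod_insert ha, sum_insert ha, prod_insert ha]
    exact Ecal.mul_mem_mul hp.1 (prod_ne_zero_iff.mpr hp.2) hpα.1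
      ((natDegree_prod_le _ _).trans (sum_le_sum hpα.2)) hA.1 (ih hp.2 hpα.2 hA.2)

theorem Ecal.inv_mem (hA : A ∈ Ecal K α p) (hA0 : constantCoeff A = 1) :
    A⁻¹ ∈ Ecal K α p := by
  rw [mem_Ecal_iff] at hA ⊢
  intro n
  induction n using Nat.strong_induction_on with
  | _ n ih =>
    rw [coeff_inv, hA0, inv_one, neg_one_mul]
    split_ifs with hn
    · exact ⟨1, by simp, by simp [hn]⟩
    · refine neg_mem (sum_mem fun x hx => ?_)
      split_ifs with hx2
      · rw [← mem_antidiagonal.mp hx]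
        exact mul_mem_ecalCoeffs (hA x.1) (ih x.2 hx2)
      · exact zero_mem _

end Ecal

section Series

variable {K : Type*} [Field K]

theorem coeff_toSeries (P : K[X][X]) (n : ℕ) :
    coeff n (toSeries P) = algebraMap K[X] (RatFunc K) (P.coeff n) := by
  rw [toSeries, Polynomial.coeff_coe, Polynomial.coeff_map]

theorem constantCoeff_toSeries (P : K[X][X]) :
    constantCoeff (toSeries P) = algebraMap K[X] (RatFunc K) (P.eval 0) := by
  rw [← coeff_zero_eq_constantCoeff_apply, coeff_toSeries, coeff_zero_eq_eval_zero]

theorem isUnit_toSeries {P : K[X][X]} (hP : P.eval 0 ≠ 0) : IsUnit (toSeries P) := by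
  rw [isUnit_iff_constantCoeff, constantCoeff_toSeries, isUnit_iff_ne_zero]
  exact RatFunc.algebraMap_ne_zero hP

noncomputable def normalizedSeries (K : Type*) [Field K] :
    K[X][X] →* PowerSeries (RatFunc K) where
  toFun P := PowerSeries.C (algebraMap K[X] (RatFunc K) (P.eval 0))⁻¹ * toSeries P
  map_one' := by simp [toSeries]
  map_mul' P R := by
    simp only [toSeries, eval_mul, map_mul, Polynomial.map_mul, Polynomial.coe_mul, mul_inv]
    ring

theorem normalizedSeries_apply (P : K[X][X]) :
    normalizedSeries K P =
      PowerSeries.C (algebraMap K[X] (RatFunc K) (P.eval 0))⁻¹ * toSeries P :=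
  rfl

theorem constantCoeff_normalizedSeries {P : K[X][X]} (hP : P.eval 0 ≠ 0) :
    constantCoeff (normalizedSeries K P) = 1 := by
  rw [normalizedSeries_apply, map_mul, constantCoeff_C, constantCoeff_toSeries,
    inv_mul_cancel₀ (RatFunc.algebraMap_ne_zero hP)]

theorem inv_normalizedSeries (P : K[X][X]) :
    (normalizedSeries K P)⁻¹ =
      PowerSeries.C (algebraMap K[X] (RatFunc K) (P.eval 0)) * (toSeries P)⁻¹ := by
  rw [normalizedSeries_apply, PowerSeries.mul_inv_rev, C_inv, inv_inv, mul_comm]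

theorem normalizedSeries_mem_Ecal {P : K[X][X]} (hP : P.eval 0 ≠ 0) :
    normalizedSeries K P ∈ Ecal K (degX P) (P.eval 0) := by
  rw [mem_Ecal_iff]
  intro n
  rw [normalizedSeries_apply, PowerSeries.coeff_C_mul, coeff_toSeries]
  have hp := RatFunc.algebraMap_ne_zero hP
  cases n with
  | zero => exact ⟨1, by simp, by rw [coeff_zero_eq_eval_zero, inv_mul_cancel₀ hp]; simp⟩
  | succ n =>
    refine ⟨P.coeff (n + 1) * P.eval 0 ^ n, ?_, ?_⟩
    · exact (natDegree_mul_le_of_le (natDegree_coeff_le_degX P _)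
        (natDegree_pow_le_of_le n (natDegree_eval_zero_le_degX P))).trans_eq (by ring)
    · rw [map_mul, map_pow, pow_succ]
      field_simp

end Series

theorem inv_mem_Ecal (K : Type*) [Field K]
    (Q Qs : Polynomial (Polynomial K))
    (hq0 : (Q.eval 0).eval 0 ≠ 0)
    (hsf : IsSquarefreePart Q Qs) :
    IsUnit (toSeries Q) ∧
    PowerSeries.C (algebraMap (Polynomial K) (RatFunc K) (Q.eval 0)) *
        (toSeries Q)⁻¹ ∈ Ecal K (degX Qs) (Qs.eval 0) := by
  obtain ⟨m, f, -, -, rfl, rfl⟩ := hsf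
  have hq : (∏ i, f i ^ ((i : ℕ) + 1)).eval 0 ≠ 0 := fun h => hq0 (by rw [h, eval_zero])
  have hf : ∀ i, (f i).eval 0 ≠ 0 := fun i h => hq (by
    rw [eval_prod]
    exact prod_eq_zero (mem_univ i) (by rw [eval_pow, h, zero_pow (Nat.succ_ne_zero _)]))
  refine ⟨isUnit_toSeries hq, ?_⟩
  rw [← inv_normalizedSeries, eval_prod,
    degX_prod _ _ fun i _ h => hf i (by rw [h, eval_zero])]
  refine Ecal.inv_mem ?_ (constantCoeff_normalizedSeries hq)
  rw [map_prod]
  refine Ecal.prod_mem_prod (fun i _ => hf i) (fun i _ => natDegree_eval_zero_le_degX _)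
    fun i _ => ?_
  rw [map_pow]
  exact (Ecal.submonoid K _ _).pow_mem (normalizedSeries_mem_Ecal (hf i)) _
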